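/- arXiv:0802.1327 — 2 statements merged into one kernel-verified Lean document; each statement's English description precedes it below -/
import Mathlib

section
/- Let G be an (l,r)-biregular Tanner graph with n variable nodes that is an (l,r,α,γ) left expander, and let 0 ≤ β ≤ 1 with β(l−1) ∈ ℕ and β(l−1)/l < 2γ−1. Let (B_t)_{t≥0} be a sequence of sets of variable nodes such that |B_0| ≤ αn/(lr), |B_t ∪ B_{t+1}| ≤ αn for all t, and for every t: (a) every variable node in B_{t+1}∖B_t has at least l−β(l−1) of its incident edges into N(B_t); and (b) |N(B_t)| ≤ l·|B_t∖B_{t+1}| + ((l+β(l−1))/2)·|B_t∩B_{t+1}|. Then |B_{t+1}| < |B_t| whenever B_t ≠ ∅; in particular B_t = ∅ for some t ≤ |B_0|. -/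
/-!
Write `T = B t`, `S = B (t+1)` and `x = |T \ S|`, `y = |T ∩ S|`, `z = |S \ T|`. By (a) every newly
bad node has at most `b = β(l-1)` edges leaving `N(T)`, so `|N(T ∪ S)| ≤ |N(T)| + b z`. Expansion of
`T ∪ S` and (b) then give `γl(x + y + z) ≤ l x + (l + b)/2 · y + b z`. Since `b < (2γ - 1)l` and
`b ≤ l`, assuming `z ≥ x` would force `(2γl - l - b)(x + y/2) ≤ 0`, i.e. `T = ∅`. Hence `z < x`,
that is `|S| < |T|`, and a strictly decreasing size reaches `0` within `|B 0|` steps.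
-/

open Finset

/-- The set of check nodes adjacent to a set `V` of variable nodes in an
`(l,r)`-biregular Tanner graph, presented (configuration-model style) as a
bijection `σ` between variable-node sockets and check-node sockets. -/
def nbhd {n m l r : ℕ} (σ : (Fin n × Fin l) ≃ (Fin m × Fin r))
    (V : Finset (Fin n)) : Finset (Fin m) :=
  (V ×ˢ (univ : Finset (Fin l))).image fun p => (σ p).1

/-- `σ` is an `(l,r,α,γ)` left expander. -/
def IsLeftExpander {n m l r : ℕ} (σ : (Fin n × Fin l) ≃ (Fin m × Fin r))
    (α γ : ℝ) : Prop :=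
  ∀ V : Finset (Fin n), (V.card : ℝ) ≤ α * n →
    γ * V.card * l ≤ ((nbhd σ V).card : ℝ)

section TannerGraph

variable {n m l r : ℕ} (σ : (Fin n × Fin l) ≃ (Fin m × Fin r))

lemma mem_nbhd {V : Finset (Fin n)} {c : Fin m} :
    c ∈ nbhd σ V ↔ ∃ v ∈ V, ∃ i, (σ (v, i)).1 = c := by
  simp [nbhd, mem_product]

def exitChecks (T : Finset (Fin n)) (v : Fin n) : Finset (Fin m) :=
  ((univ : Finset (Fin l)).filter fun i => (σ (v, i)).1 ∉ nbhd σ T).image fun i => (σ (v, i)).1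

lemma card_exitChecks_le {T : Finset (Fin n)} {v : Fin n} {b : ℕ}
    (hv : l - b ≤ ((univ : Finset (Fin l)).filter fun i => (σ (v, i)).1 ∈ nbhd σ T).card) :
    (exitChecks σ T v).card ≤ b := by
  have hsplit := card_filter_add_card_filter_not (s := (univ : Finset (Fin l)))
    (fun i => (σ (v, i)).1 ∈ nbhd σ T)
  rw [card_univ, Fintype.card_fin] at hsplit
  exact card_image_le.trans (by omega)

lemma nbhd_union_subset (T S : Finset (Fin n)) :
    nbhd σ (T ∪ S) ⊆ nbhd σ T ∪ (S \ T).biUnion (exitChecks σ T) := by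
  intro c hc
  obtain ⟨v, hv, i, rfl⟩ := (mem_nbhd σ).1 hc
  by_cases hcT : (σ (v, i)).1 ∈ nbhd σ T
  · exact mem_union_left _ hcT
  · have hvT : v ∉ T := fun hvT => hcT ((mem_nbhd σ).2 ⟨v, hvT, i, rfl⟩)
    refine mem_union_right _ (mem_biUnion.2 ⟨v, mem_sdiff.2 ⟨?_, hvT⟩, ?_⟩)
    · exact (mem_union.1 hv).resolve_left hvT
    · exact mem_image.2 ⟨i, mem_filter.2 ⟨mem_univ i, hcT⟩, rfl⟩

lemma card_nbhd_union_le {T S : Finset (Fin n)} {b : ℕ}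
    (ha : ∀ v ∈ S \ T,
      l - b ≤ ((univ : Finset (Fin l)).filter fun i => (σ (v, i)).1 ∈ nbhd σ T).card) :
    (nbhd σ (T ∪ S)).card ≤ (nbhd σ T).card + b * (S \ T).card :=
  calc (nbhd σ (T ∪ S)).card
      ≤ (nbhd σ T).card + ((S \ T).biUnion (exitChecks σ T)).card :=
        (card_le_card (nbhd_union_subset σ T S)).trans (card_union_le _ _)
    _ ≤ (nbhd σ T).card + b * (S \ T).card := by
        gcongr
        refine card_biUnion_le.trans ?_
        simpa [mul_comm] using sum_le_sum fun v hv => card_exitChecks_le σ (ha v hv)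

end TannerGraph

lemma lt_of_expansion_le {c l b x y z : ℝ} (hb : b < 2 * c - l) (hbl : b ≤ l)
    (hx : 0 ≤ x) (hxy : 0 < x + y)
    (h : c * (x + y + z) ≤ l * x + (l + b) / 2 * y + b * z) : z < x := by
  by_contra! hzx
  nlinarith [mul_nonneg (by linarith : 0 ≤ c - b) (sub_nonneg.2 hzx),
    mul_pos (by linarith : 0 < 2 * c - l - b) (by linarith : 0 < x + y / 2)]

lemma card_lt_card_of_expansion {n m l r : ℕ} {σ : (Fin n × Fin l) ≃ (Fin m × Fin r)}
    {γ : ℝ} {b : ℕ} (hb : (b : ℝ) < 2 * (γ * l) - l) (hbl : b ≤ l) {T S : Finset (Fin n)}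
    (hT : T.Nonempty)
    (hexp : γ * (T ∪ S).card * l ≤ (nbhd σ (T ∪ S)).card)
    (ha : ∀ v ∈ S \ T,
      l - b ≤ ((univ : Finset (Fin l)).filter fun i => (σ (v, i)).1 ∈ nbhd σ T).card)
    (hb2 : ((nbhd σ T).card : ℝ) ≤
      l * ((T \ S).card : ℝ) + ((l + b) / 2) * ((T ∩ S).card : ℝ)) :
    S.card < T.card := by
  have hT' : T.card = (T \ S).card + (T ∩ S).card := (card_sdiff_add_card_inter T S).symm
  have hS' : S.card = (S \ T).card + (T ∩ S).card := by
    rw [inter_comm, card_sdiff_add_card_inter]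
  have hU : (T ∪ S).card = (T \ S).card + (T ∩ S).card + (S \ T).card := by
    rw [← hT', ← card_union_of_disjoint disjoint_sdiff, union_sdiff_self_eq_union]
  have hN : ((nbhd σ (T ∪ S)).card : ℝ) ≤ (nbhd σ T).card + b * (S \ T).card := by
    exact_mod_cast card_nbhd_union_le σ ha
  have hzx : ((S \ T).card : ℝ) < (T \ S).card := by
    refine lt_of_expansion_le (y := (T ∩ S).card) hb (by exact_mod_cast hbl) (by positivity) ?_ ?_
    · exact_mod_cast hT' ▸ card_pos.2 hT
    · rw [hU] at hexp
      push_cast at hexp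
      linarith
  have : (S \ T).card < (T \ S).card := by exact_mod_cast hzx
  omega

lemma exists_le_eq_zero_of_lt_of_ne_zero {f : ℕ → ℕ} (hf : ∀ t, f t ≠ 0 → f (t + 1) < f t) :
    ∃ t ≤ f 0, f t = 0 := by
  by_contra! hne
  have hdec : ∀ k ≤ f 0, f k + k ≤ f 0 := by
    intro k hk
    induction k with
    | zero => simp
    | succ j ih =>
      have := hf j (hne j (by omega))
      have := ih (by omega)
      omega
  have := hdec (f 0) le_rfl
  exact hne (f 0) le_rfl (by omega)

theorem stmt4_general {n m l r : ℕ} (hl : 2 ≤ l)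
    (σ : (Fin n × Fin l) ≃ (Fin m × Fin r))
    (α γ β : ℝ) (b : ℕ)
    (hβ1 : β ≤ 1) (hb : (b : ℝ) = β * ((l : ℝ) - 1))
    (hγcond : β * ((l : ℝ) - 1) / l < 2 * γ - 1)
    (hexp : IsLeftExpander σ α γ)
    (B : ℕ → Finset (Fin n))
    (hsize : ∀ t : ℕ, ((B t ∪ B (t + 1)).card : ℝ) ≤ α * n)
    (ha : ∀ t : ℕ, ∀ v ∈ B (t + 1) \ B t,
      l - b ≤ ((univ : Finset (Fin l)).filter
        (fun i => (σ (v, i)).1 ∈ nbhd σ (B t))).card)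
    (hb2 : ∀ t : ℕ, ((nbhd σ (B t)).card : ℝ) ≤
      (l : ℝ) * ((B t \ B (t + 1)).card : ℝ) +
        (((l : ℝ) + b) / 2) * ((B t ∩ B (t + 1)).card : ℝ)) :
    (∀ t : ℕ, (B t).Nonempty → (B (t + 1)).card < (B t).card) ∧
      ∃ t ≤ (B 0).card, B t = ∅ := by
  have hl' : (2 : ℝ) ≤ l := by exact_mod_cast hl
  have hbγ : (b : ℝ) < 2 * (γ * l) - l := by
    rw [div_lt_iff₀ (by linarith)] at hγcond
    linarith
  have hbl : b ≤ l := by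
    have : (b : ℝ) ≤ l := by rw [hb]; nlinarith
    exact_mod_cast this
  have hstep : ∀ t, (B t).Nonempty → (B (t + 1)).card < (B t).card := fun t hT =>
    card_lt_card_of_expansion hbγ hbl hT (hexp _ (hsize t)) (ha t) (hb2 t)
  refine ⟨hstep, ?_⟩
  obtain ⟨t, ht, h0⟩ := exists_le_eq_zero_of_lt_of_ne_zero (f := fun t => (B t).card)
    fun t h => hstep t (card_ne_zero.1 h)
  exact ⟨t, ht, card_eq_zero.1 h0⟩

/-- on a sufficiently good left expander, a sequence of "bad"
sets satisfying the properties (a), (b) of message-passing bad sets strictly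
decreases in size while nonempty, and hence dies out after at most `|B 0|`
steps. -/
theorem stmt4 {n m l r : ℕ} (hl : 2 ≤ l) (hr : 2 ≤ r)
    (σ : (Fin n × Fin l) ≃ (Fin m × Fin r))
    (α γ β : ℝ) (b : ℕ)
    (hβ0 : 0 ≤ β) (hβ1 : β ≤ 1) (hb : (b : ℝ) = β * ((l : ℝ) - 1))
    (hγcond : β * ((l : ℝ) - 1) / l < 2 * γ - 1)
    (hexp : IsLeftExpander σ α γ)
    (B : ℕ → Finset (Fin n))
    (hinit : ((B 0).card : ℝ) ≤ α * n / ((l : ℝ) * r))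
    (hsize : ∀ t : ℕ, ((B t ∪ B (t + 1)).card : ℝ) ≤ α * n)
    (ha : ∀ t : ℕ, ∀ v ∈ B (t + 1) \ B t,
      l - b ≤ ((univ : Finset (Fin l)).filter
        (fun i => (σ (v, i)).1 ∈ nbhd σ (B t))).card)
    (hb2 : ∀ t : ℕ, ((nbhd σ (B t)).card : ℝ) ≤
      (l : ℝ) * ((B t \ B (t + 1)).card : ℝ) +
        (((l : ℝ) + b) / 2) * ((B t ∩ B (t + 1)).card : ℝ)) :
    (∀ t : ℕ, (B t).Nonempty → (B (t + 1)).card < (B t).card) ∧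
      ∃ t ≤ (B 0).card, B t = ∅ :=
  stmt4_general hl σ α γ β b hβ1 hb hγcond hexp B hsize ha hb2
end

section
/- Let G be an (l,r)-biregular Tanner graph and fix a vector E ∈ {±1}^n of received values (all-(+1)-codeword assumption). Run GalB and LGalB on (G,E) starting from the same initial set of bad variable-to-check messages, with ties at variable nodes resolved by the same fixed rule in both algorithms. Then for every iteration ℓ, the set of directed edges carrying message −1 after ℓ iterations of GalB is contained in the set of directed edges carrying message −1 after ℓ iterations of LGalB; in particular, the fraction of erroneous messages satisfies P_e^GalB(G,E,ℓ) ≤ P_e^LGalB(G,E,ℓ). -/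
open Finset

/-- The `j`-th of the other `l-1` indices, skipping `i`. -/
def otherIdx {l : ℕ} (i : Fin l) (j : Fin (l - 1)) : Fin l :=
  if h : (j : ℕ) < (i : ℕ) then ⟨j, lt_trans h i.isLt⟩
  else ⟨j + 1, by have h1 := j.isLt; have h2 := i.isLt; omega⟩

/-- The variable-node socket reached from the variable socket `s` by going to
its check node and out along the `b`-th of the other `r-1` check sockets.
The Tanner graph is a configuration-model socket matching `σ`. -/
def chkAdj {n m l r : ℕ} (σ : (Fin n × Fin l) ≃ (Fin m × Fin r))
    (s : Fin n × Fin l) (b : Fin (r - 1)) : Fin n × Fin l :=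
  σ.symm ((σ s).1, otherIdx (σ s).2 b)

/-- GalB check-node rule (all-one codeword convention, `true = +1`):
the product of the other `r-1` incoming messages, i.e. `+1` iff the number of
incoming `-1`s is even. -/
def galChk {n m l r : ℕ} (σ : (Fin n × Fin l) ≃ (Fin m × Fin r))
    (cur : Fin n × Fin l → Bool) (s : Fin n × Fin l) : Bool :=
  decide (Even ((univ.filter
    fun b : Fin (r - 1) => cur (chkAdj σ s b) = false).card))

/-- Linearized (LGalB) check-node rule: the minimum of the other `r-1`
incoming messages (`-1 < +1`), i.e. `+1` iff all of them are `+1`. -/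
def linChk {n m l r : ℕ} (σ : (Fin n × Fin l) ≃ (Fin m × Fin r))
    (cur : Fin n × Fin l → Bool) (s : Fin n × Fin l) : Bool :=
  decide (∀ b : Fin (r - 1), cur (chkAdj σ s b) = true)

/-- Variable-node rule of (L)GalB: majority of the received value and the
other `l-1` incoming messages, the tie (possible only for even `l`) being
resolved by the supplied bit `coin`. -/
def galVar (l : ℕ) (rec : Bool) (ms : Fin (l - 1) → Bool) (coin : Bool) : Bool :=
  let T := (if rec then 1 else 0) +
    (univ.filter fun j : Fin (l - 1) => ms j = true).card
  if l < 2 * T then true else if 2 * T < l then false else coin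

/-- The GalB variable-to-check messages after `t` iterations, starting from
the initial messages `init`, with received word `rec` and tie-breaking rule
`tie` (a fixed bit for each directed edge and iteration). -/
def galMsg {n m l r : ℕ} (σ : (Fin n × Fin l) ≃ (Fin m × Fin r))
    (rec : Fin n → Bool) (tie : (Fin n × Fin l) → ℕ → Bool)
    (init : Fin n × Fin l → Bool) : ℕ → (Fin n × Fin l) → Bool
  | 0 => init
  | t + 1 => fun s =>
    galVar l (rec s.1)
      (fun j => galChk σ (galMsg σ rec tie init t) (s.1, otherIdx s.2 j))
      (tie s t)

/-- The LGalB variable-to-check messages after `t` iterations (same variable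
rule and the same tie-breaking rule, linearized check rule). -/
def linMsg {n m l r : ℕ} (σ : (Fin n × Fin l) ≃ (Fin m × Fin r))
    (rec : Fin n → Bool) (tie : (Fin n × Fin l) → ℕ → Bool)
    (init : Fin n × Fin l → Bool) : ℕ → (Fin n × Fin l) → Bool
  | 0 => init
  | t + 1 => fun s =>
    galVar l (rec s.1)
      (fun j => linChk σ (linMsg σ rec tie init t) (s.1, otherIdx s.2 j))
      (tie s t)

/-!
Order `Bool` by `false < true`, i.e. `-1 < +1`. The variable-node rule is monotone in the incoming
check messages, and the minimum of the other incoming messages at a check node is `+1` only when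
all of them are, in which case their product is `+1` too; the same holds if the GalB messages are
pointwise larger. By induction on the iteration, every LGalB message is at most the corresponding
GalB message, so every GalB `-1` is an LGalB `-1`.
-/

theorem galVar_mono (l : ℕ) (rec coin : Bool) : Monotone fun ms => galVar l rec ms coin := by
  intro ms ms' hms
  have hcard : (univ.filter fun j => ms j = true).card ≤
      (univ.filter fun j => ms' j = true).card :=
    card_le_card fun j hj => by
      simp only [mem_filter, mem_univ, true_and] at hj ⊢
      exact Bool.le_iff_imp.1 (hms j) hj
  simp only [galVar, Bool.le_iff_imp]
  split_ifs <;> simp_all <;> omega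

theorem linChk_le_galChk {n m l r : ℕ} (σ : (Fin n × Fin l) ≃ (Fin m × Fin r))
    {cur cur' : Fin n × Fin l → Bool} (hcur : cur ≤ cur') (s : Fin n × Fin l) :
    linChk σ cur s ≤ galChk σ cur' s := by
  refine Bool.le_iff_imp.2 fun hlin => ?_
  have hgood : ∀ b, cur' (chkAdj σ s b) = true := fun b =>
    Bool.le_iff_imp.1 (hcur _) (of_decide_eq_true hlin b)
  simp [galChk, hgood]

theorem linMsg_le_galMsg {n m l r : ℕ} (σ : (Fin n × Fin l) ≃ (Fin m × Fin r))
    (rec : Fin n → Bool) (tie : (Fin n × Fin l) → ℕ → Bool) (init : Fin n × Fin l → Bool) :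
    ∀ t, linMsg σ rec tie init t ≤ galMsg σ rec tie init t
  | 0 => le_rfl
  | t + 1 => fun _ =>
    galVar_mono l _ _ fun _ => linChk_le_galChk σ (linMsg_le_galMsg σ rec tie init t) _

theorem stmt7_general {n m : ℕ} (l r : ℕ)
    (σ : (Fin n × Fin l) ≃ (Fin m × Fin r))
    (rec : Fin n → Bool) (tie : (Fin n × Fin l) → ℕ → Bool)
    (init : Fin n × Fin l → Bool) :
    (∀ t : ℕ, ∀ s : Fin n × Fin l,
      galMsg σ rec tie init t s = false → linMsg σ rec tie init t s = false) ∧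
    (∀ t : ℕ,
      (((univ.filter fun s : Fin n × Fin l =>
          galMsg σ rec tie init t s = false).card : ℝ) / ((n : ℝ) * l)) ≤
      (((univ.filter fun s : Fin n × Fin l =>
          linMsg σ rec tie init t s = false).card : ℝ) / ((n : ℝ) * l))) := by
  have hbad : ∀ t s, galMsg σ rec tie init t s = false → linMsg σ rec tie init t s = false :=
    fun t s hgal => Bool.eq_false_iff.2 fun hlin =>
      Bool.eq_false_iff.1 hgal (Bool.le_iff_imp.1 (linMsg_le_galMsg σ rec tie init t s) hlin)
  refine ⟨hbad, fun t => div_le_div_of_nonneg_right ?_ (by positivity)⟩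
  exact_mod_cast card_le_card fun s hs => by
    simp only [mem_filter, mem_univ, true_and] at hs ⊢
    exact hbad t s hs

/-- for any graph, any received word, any common initial set of
bad messages, and the same tie-breaking rule, the bad (`-1`) edges of GalB are
contained in those of LGalB at every iteration; in particular the fraction of
erroneous messages of GalB is bounded by that of LGalB. -/
theorem stmt7 {n m : ℕ} (l r : ℕ) (hl : 2 ≤ l) (hr : 2 ≤ r)
    (σ : (Fin n × Fin l) ≃ (Fin m × Fin r))
    (rec : Fin n → Bool) (tie : (Fin n × Fin l) → ℕ → Bool)
    (init : Fin n × Fin l → Bool) :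
    (∀ t : ℕ, ∀ s : Fin n × Fin l,
      galMsg σ rec tie init t s = false → linMsg σ rec tie init t s = false) ∧
    (∀ t : ℕ,
      (((univ.filter fun s : Fin n × Fin l =>
          galMsg σ rec tie init t s = false).card : ℝ) / ((n : ℝ) * l)) ≤
      (((univ.filter fun s : Fin n × Fin l =>
          linMsg σ rec tie init t s = false).card : ℝ) / ((n : ℝ) * l))) :=
  stmt7_general l r σ rec tie init
end
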